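/- Token identity changes an enclosure: for every token t, rationals lo ≤ hi, and dimension tag d, Encl (Sub (Meas t lo hi d) (Meas t lo hi d)) = {0}; and for distinct tokens t₁ ≠ t₂, the value hi - lo is an element of Encl (Sub (Meas t₁ lo hi d) (Meas t₂ lo hi d)), so when lo < hi this distinct-token enclosure is not equal to {0}. -/

import Mathlib

abbrev Token := ℕ

inductive Dim where
  | base
deriving DecidableEq

inductive Expr where
  | Exact (q : ℚ) (d : Dim)
  | Meas (t : Token) (lo hi : ℚ) (d : Dim)
  | Add (a b : Expr)
  | Sub (a b : Expr)
  | Mul (a b : Expr)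
  | Div (a b : Expr)
  | Neg (a : Expr)

abbrev TokenEnv := Token → ℚ

def TokenConsistent (σ : TokenEnv) : Expr → Prop
  | .Exact _ _ => True
  | .Meas t lo hi _ => lo ≤ σ t ∧ σ t ≤ hi
  | .Add a b => TokenConsistent σ a ∧ TokenConsistent σ b
  | .Sub a b => TokenConsistent σ a ∧ TokenConsistent σ b
  | .Mul a b => TokenConsistent σ a ∧ TokenConsistent σ b
  | .Div a b => TokenConsistent σ a ∧ TokenConsistent σ b
  | .Neg a => TokenConsistent σ a

def eval (σ : TokenEnv) : Expr → ℚ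
  | .Exact q _ => q
  | .Meas t _ _ _ => σ t
  | .Add a b => eval σ a + eval σ b
  | .Sub a b => eval σ a - eval σ b
  | .Mul a b => eval σ a * eval σ b
  | .Div a b => eval σ a / eval σ b
  | .Neg a => - eval σ a

def Encl (e : Expr) : Set ℚ := {v : ℚ | ∃ σ : TokenEnv, TokenConsistent σ e ∧ eval σ e = v}

def RewritesTo (e e' : Expr) : Prop := Encl e' ⊆ Encl e

def Interchangeable (e e' : Expr) : Prop := Encl e = Encl e'

def OneWayOnly (e e' : Expr) : Prop := RewritesTo e e' ∧ ¬ RewritesTo e' e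

theorem encl_meas (t : Token) (lo hi : ℚ) (d : Dim) : Encl (.Meas t lo hi d) = Set.Icc lo hi := by
  ext v
  constructor
  · rintro ⟨σ, hσ, rfl⟩
    exact hσ
  · intro hv
    exact ⟨fun _ => v, hv, rfl⟩

theorem encl_sub_self {e : Expr} (he : (Encl e).Nonempty) : Encl (.Sub e e) = {0} := by
  obtain ⟨v, σ, hσ, -⟩ := he
  ext w
  constructor
  · rintro ⟨τ, -, rfl⟩
    exact sub_self (eval τ e)
  · rintro rfl
    exact ⟨σ, ⟨hσ, hσ⟩, sub_self (eval σ e)⟩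

theorem sub_mem_encl_sub_meas_of_ne {t₁ t₂ : Token} (hne : t₁ ≠ t₂) {lo₁ hi₁ lo₂ hi₂ x₁ x₂ : ℚ}
    (h₁ : x₁ ∈ Set.Icc lo₁ hi₁) (h₂ : x₂ ∈ Set.Icc lo₂ hi₂) (d₁ d₂ : Dim) :
    x₁ - x₂ ∈ Encl (.Sub (.Meas t₁ lo₁ hi₁ d₁) (.Meas t₂ lo₂ hi₂ d₂)) := by
  let σ : TokenEnv := Function.update (fun _ => x₂) t₁ x₁
  have hσ₁ : σ t₁ = x₁ := Function.update_self ..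
  have hσ₂ : σ t₂ = x₂ := Function.update_of_ne hne.symm ..
  refine ⟨σ, ⟨?_, ?_⟩, ?_⟩
  · rw [TokenConsistent, hσ₁]
    exact h₁
  · rw [TokenConsistent, hσ₂]
    exact h₂
  · simp only [eval, hσ₁, hσ₂]

theorem token_identity_changes_enclosure
    (t t₁ t₂ : Token) (hne : t₁ ≠ t₂) (lo hi : ℚ) (hle : lo ≤ hi) (d : Dim) :
    Encl (.Sub (.Meas t lo hi d) (.Meas t lo hi d)) = {0} ∧
    (hi - lo) ∈ Encl (.Sub (.Meas t₁ lo hi d) (.Meas t₂ lo hi d)) ∧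
    (lo < hi → Encl (.Sub (.Meas t₁ lo hi d) (.Meas t₂ lo hi d)) ≠ {0}) := by
  have hmem : hi - lo ∈ Encl (.Sub (.Meas t₁ lo hi d) (.Meas t₂ lo hi d)) :=
    sub_mem_encl_sub_meas_of_ne hne (Set.right_mem_Icc.2 hle) (Set.left_mem_Icc.2 hle) d d
  refine ⟨encl_sub_self ?_, hmem, fun hlt hzero => ?_⟩
  · rw [encl_meas]
    exact Set.nonempty_Icc.2 hle
  · rw [hzero, Set.mem_singleton_iff, sub_eq_zero] at hmem
    exact hlt.ne' hmem
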